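/- Let {ψ_n}_{n=0}^∞ be the orthonormal basis of L²(0,1) obtained by applying the Gram–Schmidt orthonormalization procedure to the sequence of functions {sⁿe^s}_{n=0}^∞ (in order n = 0, 1, 2, ...). Define a_{mn} = ⟨ψ_n', ψ_m⟩ (the L²(0,1) inner product of the derivative of ψ_n with ψ_m). Then a_{nn} = 1 for all n, and a_{mn} = 0 whenever n < m. -/

import Mathlib

/-! Write `ψ n = Pₙ eˢ` with `deg Pₙ = n`; then `ψ n' = (Pₙ + Pₙ') eˢ`. For fixed `m`, the linear
functional `p ↦ ⟨p eˢ, ψ m⟩` vanishes on `P₀, …, Pₘ₋₁`, which span the polynomials of degree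
`< m`, so for `n ≤ m` it kills `Pₙ'` and `⟨ψ n', ψ m⟩ = ⟨ψ n, ψ m⟩ = δₙₘ`. -/

open MeasureTheory Real intervalIntegral Polynomial

namespace Polynomial

theorem degree_sum_fin_C_mul_X_pow {R : Type*} [Semiring R] {n : ℕ} (c : Fin (n + 1) → R)
    (hc : c (Fin.last n) ≠ 0) :
    (∑ k : Fin (n + 1), C (c k) * X ^ (k : ℕ)).degree = (n : WithBot ℕ) := by
  rw [Fin.sum_univ_castSucc, degree_add_eq_right_of_degree_lt] <;>
    rw [Fin.val_last, degree_C_mul_X_pow n hc]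
  exact degree_sum_fin_lt fun i => c i.castSucc

theorem linearMap_eq_zero_of_degree_lt_of_X_pow {R M : Type*} [Semiring R] [AddCommMonoid M]
    [Module R M] (L : R[X] →ₗ[R] M) {m : ℕ} (hL : ∀ i < m, L (X ^ i) = 0) {q : R[X]}
    (hq : q.degree < m) : L q = 0 := by
  classical
  have hspan : degreeLT R m ≤ LinearMap.ker L := by
    rw [degreeLT_eq_span_X_pow, Submodule.span_le]
    simpa [Set.subset_def] using hL
  exact hspan (mem_degreeLT.mpr hq)

theorem linearMap_eq_zero_of_degree_lt {K M : Type*} [Field K] [AddCommGroup M] [Module K M]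
    (L : K[X] →ₗ[K] M) {P : ℕ → K[X]} (hP : ∀ k, (P k).degree = k) {m : ℕ}
    (hL : ∀ k < m, L (P k) = 0) {q : K[X]} (hq : q.degree < m) : L q = 0 := by
  refine linearMap_eq_zero_of_degree_lt_of_X_pow L (fun k hk => ?_) hq
  induction k using Nat.strong_induction_on with
  | _ k ih =>
    have hPk : P k ≠ 0 := fun h => by simpa [h] using hP k
    have hnat : (P k).natDegree = k := natDegree_eq_of_degree_eq_some (hP k)
    have hlow : L (P k).eraseLead = 0 :=
      linearMap_eq_zero_of_degree_lt_of_X_pow L (fun i hi => ih i hi (hi.trans hk))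
        ((degree_eraseLead_lt hPk).trans_eq (hP k))
    have hsplit := congrArg L (eraseLead_add_monomial_natDegree_leadingCoeff (P k))
    rw [map_add, hlow, zero_add, hL k hk, hnat, ← C_mul_X_pow_eq_monomial, ← smul_eq_C_mul,
      map_smul] at hsplit
    exact (smul_eq_zero.mp hsplit).resolve_left (leadingCoeff_ne_zero.mpr hPk)

end Polynomial

@[simps]
noncomputable def momentFunctional (a b : ℝ) (w : ℝ → ℝ)
    (hw : IntervalIntegrable w volume a b) : ℝ[X] →ₗ[ℝ] ℝ where
  toFun p := ∫ s in a..b, p.eval s * w s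
  map_add' p q := by
    simp only [eval_add, add_mul]
    exact integral_add (hw.continuousOn_mul p.continuousOn)
      (hw.continuousOn_mul q.continuousOn)
  map_smul' c p := by
    simp only [eval_smul, smul_eq_mul, mul_assoc, intervalIntegral.integral_const_mul,
      RingHom.id_apply]

theorem Polynomial.hasDerivAt_eval_mul_exp (p : ℝ[X]) (s : ℝ) :
    HasDerivAt (fun s => p.eval s * exp s) ((derivative p + p).eval s * exp s) s :=
  ((p.hasDerivAt s).mul (hasDerivAt_exp s)).congr_deriv (by rw [eval_add]; ring)

theorem integral_deriv_mul_eq_integral_mul {a b : ℝ} {ψ : ℕ → ℝ → ℝ} {P : ℕ → ℝ[X]}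
    (hP : ∀ k, (P k).degree = k) (hψ : ∀ k s, ψ k s = (P k).eval s * exp s)
    (horth : ∀ k m, k < m → ∫ s in a..b, ψ k s * ψ m s = 0) {n m : ℕ} (hnm : n ≤ m) :
    ∫ s in a..b, deriv (ψ n) s * ψ m s = ∫ s in a..b, ψ n s * ψ m s := by
  have hψm : Continuous (ψ m) := by
    simp only [funext (hψ m)]; fun_prop
  set L := momentFunctional a b (fun s => exp s * ψ m s)
    ((continuous_exp.mul hψm).intervalIntegrable a b)
  have hL : ∀ k, L (P k) = ∫ s in a..b, ψ k s * ψ m s := fun k => by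
    simp only [L, momentFunctional_apply, hψ k, mul_assoc]
  have hderiv : L (derivative (P n)) = 0 := by
    refine linearMap_eq_zero_of_degree_lt L hP (fun k hk => (hL k).trans (horth k m hk)) ?_
    have hPn : P n ≠ 0 := fun h => by simpa [h] using hP n
    exact (degree_derivative_lt hPn).trans_le ((hP n).trans_le (by exact_mod_cast hnm))
  calc ∫ s in a..b, deriv (ψ n) s * ψ m s = L (derivative (P n) + P n) := by
        simp only [L, momentFunctional_apply, funext (hψ n),
          ((P n).hasDerivAt_eval_mul_exp _).deriv, mul_assoc]
    _ = ∫ s in a..b, ψ n s * ψ m s := by rw [map_add, hderiv, zero_add, hL]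

theorem gramSchmidt_deriv_inner_upper_triangular_general
    (ψ : ℕ → ℝ → ℝ)
    (horth : ∀ m n : ℕ, (∫ s in (0:ℝ)..1, ψ m s * ψ n s) = if m = n then 1 else 0)
    (hform : ∀ n : ℕ, ∃ c : Fin (n + 1) → ℝ,
      c ⟨n, Nat.lt_succ_self n⟩ ≠ 0 ∧
      ∀ s : ℝ, ψ n s = ∑ k : Fin (n + 1), c k * s ^ (k : ℕ) * Real.exp s) :
    (∀ n : ℕ, (∫ s in (0:ℝ)..1, deriv (ψ n) s * ψ n s) = 1) ∧
    (∀ m n : ℕ, n < m → (∫ s in (0:ℝ)..1, deriv (ψ n) s * ψ m s) = 0) := by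
  choose c hc hψc using hform
  set P : ℕ → ℝ[X] := fun n => ∑ k : Fin (n + 1), C (c n k) * X ^ (k : ℕ)
  have hP : ∀ n, (P n).degree = n := fun n => degree_sum_fin_C_mul_X_pow (c n) (hc n)
  have hψ : ∀ n s, ψ n s = (P n).eval s * exp s := fun n s => by
    simp [P, hψc, eval_finsetSum, Finset.sum_mul]
  have hlower : ∀ k m, k < m → ∫ s in (0:ℝ)..1, ψ k s * ψ m s = 0 := fun k m hkm => by
    rw [horth, if_neg hkm.ne]
  refine ⟨fun n => ?_, fun m n hnm => ?_⟩
  · rw [integral_deriv_mul_eq_integral_mul hP hψ hlower le_rfl, horth, if_pos rfl]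
  · rw [integral_deriv_mul_eq_integral_mul hP hψ hlower hnm.le, horth, if_neg hnm.ne]

/-- Let `ψ n` be the orthonormal basis of `L²(0,1)` obtained by
Gram–Schmidt orthonormalization of the sequence `s ↦ sⁿ eˢ` (so each `ψ n` is of the
form `Pₙ(s) eˢ` with `Pₙ` a polynomial of degree exactly `n`, and the family is
orthonormal).  With `a m n = ⟨ψₙ', ψₘ⟩` the `L²(0,1)` inner product of the derivative
of `ψ n` with `ψ m`, we have `a n n = 1` for all `n`, and `a m n = 0` whenever `n < m`. -/
theorem gramSchmidt_deriv_inner_upper_triangular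
    (ψ : ℕ → ℝ → ℝ)
    (hψC1 : ∀ n, ContDiff ℝ 1 (ψ n))
    (horth : ∀ m n : ℕ, (∫ s in (0:ℝ)..1, ψ m s * ψ n s) = if m = n then 1 else 0)
    (hform : ∀ n : ℕ, ∃ c : Fin (n + 1) → ℝ,
      c ⟨n, Nat.lt_succ_self n⟩ ≠ 0 ∧
      ∀ s : ℝ, ψ n s = ∑ k : Fin (n + 1), c k * s ^ (k : ℕ) * Real.exp s) :
    (∀ n : ℕ, (∫ s in (0:ℝ)..1, deriv (ψ n) s * ψ n s) = 1) ∧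
    (∀ m n : ℕ, n < m → (∫ s in (0:ℝ)..1, deriv (ψ n) s * ψ m s) = 0) :=
  gramSchmidt_deriv_inner_upper_triangular_general ψ horth hform
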